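/- For every n ≥ 1 and p > 1 there exists a constant c = c(n,p) > 0 such that for all ξ, η ∈ ℝ^k with ξ ≠ η and all μ ∈ [0,1], c⁻¹(μ² + |ξ|² + |η|²)^((p-2)/2) ≤ |V_p(ξ) - V_p(η)|²/|ξ - η|² ≤ c(μ² + |ξ|² + |η|²)^((p-2)/2). -/

import Mathlib

/-!
Put `a = ‖ξ‖`, `b = ‖η‖`, `s = ⟪ξ, η⟫`. Both `‖V_p ξ - V_p η‖²` and `‖ξ - η‖²` are affine in
`s ∈ [-ab, ab]`, so it suffices to compare them at `s = ±ab`, where they become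
`(V_p a ∓ V_p b)²` and `(a ∓ b)²` for the scalar map `V_p t = (μ² + t²)^((p-2)/4) t`.
For `0 ≤ b ≤ a` the derivative of the scalar map lies between `min 1 (p/2)` and `max 1 (p/2)`
times `(μ² + t²)^((p-2)/4)`; the mean value theorem gives one of the bounds on `V_p a - V_p b`
and the monotonicity of the weight `(μ² + t²)^((p-2)/4)` gives the other, the direction
depending on the sign of `p - 2`. Finally `μ² + a² ≤ μ² + a² + b² ≤ 2 (μ² + a²)`, so the two
weights agree up to the factor `2 ^ |(p-2)/4|`.
-/

open Real Set

theorem rpow_le_two_rpow_abs {t : ℝ} (q : ℝ) (h1 : 1 ≤ t) (h2 : t ≤ 2) : t ^ q ≤ 2 ^ |q| :=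
  (rpow_le_rpow_of_exponent_le h1 (le_abs_self q)).trans
    (rpow_le_rpow (by linarith) h2 (abs_nonneg q))

theorem rpow_mem_Icc_of_le_of_le_two_mul {A B : ℝ} (q : ℝ) (hA : 0 < A) (hAB : A ≤ B)
    (hB : B ≤ 2 * A) : A ^ q ∈ Icc ((2 ^ |q|)⁻¹ * B ^ q) (2 ^ |q| * B ^ q) := by
  have h1 : 1 ≤ B / A := by rwa [one_le_div hA]
  have h2 : B / A ≤ 2 := by rwa [div_le_iff₀ hA]
  have hBA : B ^ q = (B / A) ^ q * A ^ q := by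
    rw [← mul_rpow (by positivity) hA.le, div_mul_cancel₀ B hA.ne']
  have hneg := rpow_le_two_rpow_abs (-q) h1 h2
  rw [abs_neg, rpow_neg (by positivity), inv_le_iff_one_le_mul₀ (by positivity)] at hneg
  constructor
  · rw [inv_mul_le_iff₀ (by positivity), hBA]
    exact mul_le_mul_of_nonneg_right (rpow_le_two_rpow_abs q h1 h2) (by positivity)
  · rw [hBA, ← mul_assoc]
    exact le_mul_of_one_le_left (by positivity) (by linarith)

theorem sq_sub_two_mul_add_sq_mem_Icc {a b A B W s ℓ u : ℝ} (hAB : A * B = W * (a * b))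
    (hs : |s| ≤ a * b) (hsub : (A - B) ^ 2 ∈ Icc (ℓ * (a - b) ^ 2) (u * (a - b) ^ 2))
    (hadd : (A + B) ^ 2 ∈ Icc (ℓ * (a + b) ^ 2) (u * (a + b) ^ 2)) :
    A ^ 2 - 2 * W * s + B ^ 2 ∈
      Icc (ℓ * (a ^ 2 - 2 * s + b ^ 2)) (u * (a ^ 2 - 2 * s + b ^ 2)) := by
  obtain ⟨hs₁, hs₂⟩ := abs_le.1 hs
  obtain ⟨h₁, h₂⟩ := hsub
  obtain ⟨h₃, h₄⟩ := hadd
  constructor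
  · rcases le_total ℓ W with h | h
    · nlinarith [mul_nonneg (sub_nonneg.2 h) (by linarith : 0 ≤ a * b - s)]
    · nlinarith [mul_nonneg (sub_nonneg.2 h) (by linarith : 0 ≤ a * b + s)]
  · rcases le_total u W with h | h
    · nlinarith [mul_nonneg (sub_nonneg.2 h) (by linarith : 0 ≤ a * b + s)]
    · nlinarith [mul_nonneg (sub_nonneg.2 h) (by linarith : 0 ≤ a * b - s)]

noncomputable def Vp {E : Type*} [NormedAddCommGroup E] [NormedSpace ℝ E] (p μ : ℝ) (z : E) : E :=
  (μ ^ 2 + ‖z‖ ^ 2) ^ ((p - 2) / 4) • z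

@[simp]
theorem Vp_zero {E : Type*} [NormedAddCommGroup E] [NormedSpace ℝ E] (p μ : ℝ) :
    Vp p μ (0 : E) = 0 := by
  rw [Vp, smul_zero]

noncomputable def Vp.lowerConst (p : ℝ) : ℝ := min 1 (p / 2) / 2 / 2 ^ |(p - 2) / 4|

noncomputable def Vp.upperConst (p : ℝ) : ℝ := 2 * max 1 (p / 2) * 2 ^ |(p - 2) / 4|

theorem Vp.lowerConst_pos {p : ℝ} (hp : 0 < p) : 0 < Vp.lowerConst p :=
  div_pos (half_pos (lt_min one_pos (half_pos hp))) (by positivity)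

section Scalar

variable {p μ x y : ℝ}

theorem Vp_real_eq (p μ t : ℝ) : Vp p μ t = (μ ^ 2 + t ^ 2) ^ ((p - 2) / 4) * t := by
  rw [Vp, Real.norm_eq_abs, sq_abs, smul_eq_mul]

theorem hasDerivAt_Vp_real (p μ : ℝ) {t : ℝ} (ht : 0 < μ ^ 2 + t ^ 2) :
    HasDerivAt (Vp p μ)
      ((μ ^ 2 + t ^ 2) ^ ((p - 2) / 4) * ((μ ^ 2 + p / 2 * t ^ 2) / (μ ^ 2 + t ^ 2))) t := by
  have hbase : HasDerivAt (fun t : ℝ => μ ^ 2 + t ^ 2) (2 * t) t := by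
    simpa using (hasDerivAt_pow 2 t).const_add (μ ^ 2)
  rw [show (Vp p μ : ℝ → ℝ) = fun t => (μ ^ 2 + t ^ 2) ^ ((p - 2) / 4) * t from
    funext (Vp_real_eq p μ)]
  refine ((hbase.rpow_const (Or.inl ht.ne')).mul (hasDerivAt_id t)).congr_deriv ?_
  rw [rpow_sub_one ht.ne', id]
  field_simp
  ring

theorem differentiableOn_Vp_real_Ioi (p μ : ℝ) : DifferentiableOn ℝ (Vp p μ : ℝ → ℝ) (Ioi 0) :=
  fun t ht => (hasDerivAt_Vp_real p μ (by have : 0 < t := ht; positivity)).differentiableAt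
    |>.differentiableWithinAt

theorem Vp_real_sub_le_of_two_le (hp : 2 ≤ p) (hy : 0 ≤ y) (hyx : y ≤ x) :
    Vp p μ x - Vp p μ y ≤ p / 2 * ((μ ^ 2 + x ^ 2) ^ ((p - 2) / 4) * (x - y)) := by
  rcases hy.eq_or_lt with rfl | hy
  · rw [Vp_zero, sub_zero, sub_zero, Vp_real_eq]
    exact le_mul_of_one_le_left (mul_nonneg (by positivity) hyx) (by linarith)
  rw [← mul_assoc]
  have hdiff := (differentiableOn_Vp_real_Ioi p μ).mono (Icc_subset_Ioi_iff hyx |>.2 hy)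
  refine (convex_Icc y x).image_sub_le_mul_sub_of_deriv_le hdiff.continuousOn
    (hdiff.mono interior_subset) (fun θ hθ => ?_) y ⟨le_rfl, hyx⟩ x ⟨hyx, le_rfl⟩ hyx
  rw [interior_Icc] at hθ
  have hθ0 : 0 < θ := hy.trans hθ.1
  have hB : 0 < μ ^ 2 + θ ^ 2 := by positivity
  have hθx : μ ^ 2 + θ ^ 2 ≤ μ ^ 2 + x ^ 2 := by nlinarith [hθ.2]
  rw [(hasDerivAt_Vp_real p μ hB).deriv, mul_comm (p / 2) ((μ ^ 2 + x ^ 2) ^ ((p - 2) / 4))]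
  refine mul_le_mul (rpow_le_rpow hB.le hθx (by linarith : (0 : ℝ) ≤ (p - 2) / 4)) ?_
    (by positivity) (by positivity)
  rw [div_le_iff₀ hB]
  nlinarith [sq_nonneg μ]

theorem le_Vp_real_sub_of_le_two (hp0 : 0 < p) (hp : p ≤ 2) (hy : 0 ≤ y) (hyx : y ≤ x) :
    p / 2 * ((μ ^ 2 + x ^ 2) ^ ((p - 2) / 4) * (x - y)) ≤ Vp p μ x - Vp p μ y := by
  rcases hy.eq_or_lt with rfl | hy
  · rw [Vp_zero, sub_zero, sub_zero, Vp_real_eq]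
    exact mul_le_of_le_one_left (mul_nonneg (by positivity) hyx) (by linarith)
  rw [← mul_assoc]
  have hdiff := (differentiableOn_Vp_real_Ioi p μ).mono (Icc_subset_Ioi_iff hyx |>.2 hy)
  refine (convex_Icc y x).mul_sub_le_image_sub_of_le_deriv hdiff.continuousOn
    (hdiff.mono interior_subset) (fun θ hθ => ?_) y ⟨le_rfl, hyx⟩ x ⟨hyx, le_rfl⟩ hyx
  rw [interior_Icc] at hθ
  have hθ0 : 0 < θ := hy.trans hθ.1
  have hB : 0 < μ ^ 2 + θ ^ 2 := by positivity
  have hθx : μ ^ 2 + θ ^ 2 ≤ μ ^ 2 + x ^ 2 := by nlinarith [hθ.2]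
  rw [(hasDerivAt_Vp_real p μ hB).deriv, mul_comm (p / 2) ((μ ^ 2 + x ^ 2) ^ ((p - 2) / 4))]
  refine mul_le_mul (rpow_le_rpow_of_nonpos hB hθx (by linarith)) ?_
    (by positivity) (by positivity)
  rw [le_div_iff₀ hB]
  nlinarith [sq_nonneg μ]

theorem le_Vp_real_sub_of_two_le (hp : 2 ≤ p) (hy : 0 ≤ y) (hyx : y ≤ x) :
    (μ ^ 2 + x ^ 2) ^ ((p - 2) / 4) * (x - y) ≤ Vp p μ x - Vp p μ y := by
  have hw : (μ ^ 2 + y ^ 2) ^ ((p - 2) / 4) ≤ (μ ^ 2 + x ^ 2) ^ ((p - 2) / 4) :=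
    rpow_le_rpow (by positivity) (by nlinarith) (by linarith)
  rw [Vp_real_eq, Vp_real_eq]
  nlinarith [mul_le_mul_of_nonneg_right hw hy]

theorem Vp_real_sub_le_of_le_two (hp : p ≤ 2) (hy : 0 ≤ y) (hyx : y ≤ x) :
    Vp p μ x - Vp p μ y ≤ (μ ^ 2 + x ^ 2) ^ ((p - 2) / 4) * (x - y) := by
  rcases hy.eq_or_lt with rfl | hy
  · simp [Vp_real_eq]
  have hw : (μ ^ 2 + x ^ 2) ^ ((p - 2) / 4) ≤ (μ ^ 2 + y ^ 2) ^ ((p - 2) / 4) :=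
    rpow_le_rpow_of_nonpos (by positivity) (by nlinarith) (by linarith)
  rw [Vp_real_eq, Vp_real_eq]
  nlinarith [mul_le_mul_of_nonneg_right hw hy.le]

theorem Vp_real_sub_mem_Icc (hp : 0 < p) (hy : 0 ≤ y) (hyx : y ≤ x) :
    Vp p μ x - Vp p μ y ∈
      Icc (min 1 (p / 2) * ((μ ^ 2 + x ^ 2) ^ ((p - 2) / 4) * (x - y)))
        (max 1 (p / 2) * ((μ ^ 2 + x ^ 2) ^ ((p - 2) / 4) * (x - y))) := by
  have hd : 0 ≤ (μ ^ 2 + x ^ 2) ^ ((p - 2) / 4) * (x - y) :=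
    mul_nonneg (by positivity) (by linarith)
  rcases le_total 2 p with h | h
  · exact ⟨(mul_le_of_le_one_left hd (min_le_left _ _)).trans (le_Vp_real_sub_of_two_le h hy hyx),
      (Vp_real_sub_le_of_two_le h hy hyx).trans
        (mul_le_mul_of_nonneg_right (le_max_right _ _) hd)⟩
  · exact ⟨(mul_le_mul_of_nonneg_right (min_le_right _ _) hd).trans
        (le_Vp_real_sub_of_le_two hp h hy hyx),
      (Vp_real_sub_le_of_le_two h hy hyx).trans (le_mul_of_one_le_left hd (le_max_left _ _))⟩

theorem Vp_real_add_mem_Icc (hp : 0 < p) (hy : 0 ≤ y) (hyx : y ≤ x) :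
    Vp p μ x + Vp p μ y ∈
      Icc ((μ ^ 2 + x ^ 2) ^ ((p - 2) / 4) * (x + y) / 2)
        (2 * (μ ^ 2 + x ^ 2) ^ ((p - 2) / 4) * (x + y)) := by
  have hmono : 0 ≤ Vp p μ x - Vp p μ y :=
    le_trans (mul_nonneg (lt_min one_pos (half_pos hp)).le
      (mul_nonneg (by positivity) (sub_nonneg.2 hyx))) (Vp_real_sub_mem_Icc (μ := μ) hp hy hyx).1
  have hVy : 0 ≤ Vp p μ y := by rw [Vp_real_eq]; positivity
  have hR : 0 ≤ (μ ^ 2 + x ^ 2) ^ ((p - 2) / 4) := by positivity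
  rw [Vp_real_eq p μ x] at hmono ⊢
  constructor <;> nlinarith [mul_le_mul_of_nonneg_left hyx hR, mul_nonneg hR hy]

theorem Vp_real_sub_add_mem_Icc_of_le (hp : 0 < p) (hy : 0 ≤ y) (hyx : y ≤ x) :
    Vp p μ x - Vp p μ y ∈
        Icc (Vp.lowerConst p * ((μ ^ 2 + x ^ 2 + y ^ 2) ^ ((p - 2) / 4) * (x - y)))
          (Vp.upperConst p * ((μ ^ 2 + x ^ 2 + y ^ 2) ^ ((p - 2) / 4) * (x - y))) ∧
      Vp p μ x + Vp p μ y ∈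
        Icc (Vp.lowerConst p * ((μ ^ 2 + x ^ 2 + y ^ 2) ^ ((p - 2) / 4) * (x + y)))
          (Vp.upperConst p * ((μ ^ 2 + x ^ 2 + y ^ 2) ^ ((p - 2) / 4) * (x + y))) := by
  rcases (hy.trans hyx).eq_or_lt with rfl | hx
  · obtain rfl : y = 0 := le_antisymm hyx hy
    simp
  have hrT : μ ^ 2 + x ^ 2 ≤ μ ^ 2 + x ^ 2 + y ^ 2 := by nlinarith
  have hTr : μ ^ 2 + x ^ 2 + y ^ 2 ≤ 2 * (μ ^ 2 + x ^ 2) := by nlinarith [sq_nonneg μ]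
  obtain ⟨hRlo, hRhi⟩ := rpow_mem_Icc_of_le_of_le_two_mul ((p - 2) / 4) (by positivity) hrT hTr
  obtain ⟨hdlo, hdhi⟩ := Vp_real_sub_mem_Icc (μ := μ) hp hy hyx
  obtain ⟨hslo, hshi⟩ := Vp_real_add_mem_Icc (μ := μ) hp hy hyx
  set S := (μ ^ 2 + x ^ 2 + y ^ 2) ^ ((p - 2) / 4)
  set K : ℝ := 2 ^ |(p - 2) / 4|
  set m := min 1 (p / 2)
  set M := max 1 (p / 2)
  have hm : 0 < m := lt_min one_pos (half_pos hp)
  have hm1 : m ≤ 1 := min_le_left _ _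
  have hM : 1 ≤ M := le_max_left _ _
  have hKS : 0 ≤ K * S := by positivity
  have hKS' : 0 ≤ K⁻¹ * S := by positivity
  have hd : 0 ≤ x - y := by linarith
  have hs : 0 ≤ x + y := by linarith
  rw [show Vp.lowerConst p = m / 2 * K⁻¹ by rw [Vp.lowerConst]; ring,
    show Vp.upperConst p = 2 * M * K from rfl]
  refine ⟨⟨?_, ?_⟩, ⟨?_, ?_⟩⟩
  · nlinarith [mul_nonneg (mul_nonneg hm.le hd) (sub_nonneg.2 hRlo),
      mul_nonneg (mul_nonneg hm.le hd) hKS']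
  · nlinarith [mul_nonneg (mul_nonneg (by linarith : (0 : ℝ) ≤ M) hd) (sub_nonneg.2 hRhi),
      mul_nonneg (mul_nonneg (by linarith : (0 : ℝ) ≤ M) hd) hKS]
  · nlinarith [mul_nonneg hs (sub_nonneg.2 hRlo),
      mul_nonneg (mul_nonneg hs hKS') (sub_nonneg.2 hm1)]
  · nlinarith [mul_nonneg hs (sub_nonneg.2 hRhi), mul_nonneg (mul_nonneg hs hKS) (sub_nonneg.2 hM)]

theorem sq_Vp_real_sub_add_mem_Icc (hp : 0 < p) (hx : 0 ≤ x) (hy : 0 ≤ y) :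
    (Vp p μ x - Vp p μ y) ^ 2 ∈
        Icc (Vp.lowerConst p ^ 2 * (μ ^ 2 + x ^ 2 + y ^ 2) ^ ((p - 2) / 2) * (x - y) ^ 2)
          (Vp.upperConst p ^ 2 * (μ ^ 2 + x ^ 2 + y ^ 2) ^ ((p - 2) / 2) * (x - y) ^ 2) ∧
      (Vp p μ x + Vp p μ y) ^ 2 ∈
        Icc (Vp.lowerConst p ^ 2 * (μ ^ 2 + x ^ 2 + y ^ 2) ^ ((p - 2) / 2) * (x + y) ^ 2)
          (Vp.upperConst p ^ 2 * (μ ^ 2 + x ^ 2 + y ^ 2) ^ ((p - 2) / 2) * (x + y) ^ 2) := by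
  wlog hyx : y ≤ x generalizing x y
  · have := this hy hx (le_of_not_ge hyx)
    rwa [sub_sq_comm (Vp p μ y), sub_sq_comm y, add_comm (Vp p μ y), add_comm y,
      add_right_comm (μ ^ 2)] at this
  have hS : ((μ ^ 2 + x ^ 2 + y ^ 2) ^ ((p - 2) / 4)) ^ 2 =
      (μ ^ 2 + x ^ 2 + y ^ 2) ^ ((p - 2) / 2) := by
    rw [← rpow_mul_natCast (by positivity)]
    ring_nf
  have sq_mem {v c C d : ℝ} (hd : 0 ≤ d) (hc : 0 ≤ c) (h : v ∈ Icc (c * d) (C * d)) :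
      v ^ 2 ∈ Icc (c ^ 2 * d ^ 2) (C ^ 2 * d ^ 2) := by
    have hcd : 0 ≤ c * d := mul_nonneg hc hd
    rw [← mul_pow, ← mul_pow]
    exact ⟨pow_le_pow_left₀ hcd h.1 2, pow_le_pow_left₀ (hcd.trans h.1) h.2 2⟩
  obtain ⟨hsub, hadd⟩ := Vp_real_sub_add_mem_Icc_of_le (μ := μ) hp hy hyx
  have hc : 0 ≤ Vp.lowerConst p * (μ ^ 2 + x ^ 2 + y ^ 2) ^ ((p - 2) / 4) :=
    mul_nonneg (Vp.lowerConst_pos hp).le (by positivity)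
  simp only [← mul_assoc] at hsub hadd
  have h₁ := sq_mem (by linarith) hc hsub
  have h₂ := sq_mem (by linarith) hc hadd
  simp only [mul_pow, hS] at h₁ h₂
  exact ⟨h₁, h₂⟩

end Scalar

section InnerProductSpace

variable {E : Type*} [NormedAddCommGroup E] [InnerProductSpace ℝ E]

theorem norm_Vp_sub_Vp_sq (p μ : ℝ) (ξ η : E) :
    ‖Vp p μ ξ - Vp p μ η‖ ^ 2 =
      Vp p μ ‖ξ‖ ^ 2
        - 2 * ((μ ^ 2 + ‖ξ‖ ^ 2) ^ ((p - 2) / 4) * (μ ^ 2 + ‖η‖ ^ 2) ^ ((p - 2) / 4))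
          * inner ℝ ξ η
        + Vp p μ ‖η‖ ^ 2 := by
  rw [norm_sub_sq_real, Vp, Vp, norm_smul, norm_smul, real_inner_smul_left,
    real_inner_smul_right, Real.norm_of_nonneg (by positivity),
    Real.norm_of_nonneg (by positivity), Vp_real_eq, Vp_real_eq]
  ring

theorem norm_Vp_sub_Vp_sq_mem_Icc {p : ℝ} (hp : 0 < p) (μ : ℝ) (ξ η : E) :
    ‖Vp p μ ξ - Vp p μ η‖ ^ 2 ∈
      Icc (Vp.lowerConst p ^ 2 * (μ ^ 2 + ‖ξ‖ ^ 2 + ‖η‖ ^ 2) ^ ((p - 2) / 2) * ‖ξ - η‖ ^ 2)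
        (Vp.upperConst p ^ 2 * (μ ^ 2 + ‖ξ‖ ^ 2 + ‖η‖ ^ 2) ^ ((p - 2) / 2) * ‖ξ - η‖ ^ 2) := by
  obtain ⟨hsub, hadd⟩ := sq_Vp_real_sub_add_mem_Icc (μ := μ) hp (norm_nonneg ξ) (norm_nonneg η)
  rw [norm_Vp_sub_Vp_sq, norm_sub_sq_real]
  exact sq_sub_two_mul_add_sq_mem_Icc (by rw [Vp_real_eq, Vp_real_eq]; ring)
    (abs_real_inner_le_norm ξ η) hsub hadd

end InnerProductSpace

theorem Vp_difference_equivalence_general (p : ℝ) (hp : 1 < p) :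
    ∃ c : ℝ, 0 < c ∧ ∀ (k : ℕ) (μ : ℝ), μ ∈ Set.Icc (0:ℝ) 1 →
      ∀ ξ η : EuclideanSpace ℝ (Fin k), ξ ≠ η →
        c⁻¹ * (μ ^ 2 + ‖ξ‖ ^ 2 + ‖η‖ ^ 2) ^ ((p - 2) / 2) ≤
            ‖((μ ^ 2 + ‖ξ‖ ^ 2) ^ ((p - 2) / 4) • ξ -
                (μ ^ 2 + ‖η‖ ^ 2) ^ ((p - 2) / 4) • η : EuclideanSpace ℝ (Fin k))‖ ^ 2 /
              ‖ξ - η‖ ^ 2 ∧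
          ‖((μ ^ 2 + ‖ξ‖ ^ 2) ^ ((p - 2) / 4) • ξ -
                (μ ^ 2 + ‖η‖ ^ 2) ^ ((p - 2) / 4) • η : EuclideanSpace ℝ (Fin k))‖ ^ 2 /
              ‖ξ - η‖ ^ 2 ≤
            c * (μ ^ 2 + ‖ξ‖ ^ 2 + ‖η‖ ^ 2) ^ ((p - 2) / 2) := by
  have hp0 : 0 < p := by linarith
  have hℓ : 0 < Vp.lowerConst p ^ 2 := pow_pos (Vp.lowerConst_pos hp0) 2
  refine ⟨max (Vp.lowerConst p ^ 2)⁻¹ (Vp.upperConst p ^ 2), lt_max_of_lt_left (inv_pos.2 hℓ), ?_⟩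
  intro k μ _ ξ η hne
  have hD : 0 < ‖ξ - η‖ ^ 2 := pow_pos (norm_pos_iff.2 (sub_ne_zero.2 hne)) 2
  obtain ⟨hlo, hhi⟩ := norm_Vp_sub_Vp_sq_mem_Icc hp0 μ ξ η
  constructor
  · rw [le_div_iff₀ hD]
    refine le_trans ?_ hlo
    gcongr
    exact inv_le_of_inv_le₀ hℓ (le_max_left _ _)
  · rw [div_le_iff₀ hD]
    refine hhi.trans ?_
    gcongr
    exact le_max_right _ _

/-- equivalence of `V_p` differences with the standard elliptic quantity. -/
theorem Vp_difference_equivalence (n : ℕ) (hn : 1 ≤ n) (p : ℝ) (hp : 1 < p) :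
    ∃ c : ℝ, 0 < c ∧ ∀ (k : ℕ) (μ : ℝ), μ ∈ Set.Icc (0:ℝ) 1 →
      ∀ ξ η : EuclideanSpace ℝ (Fin k), ξ ≠ η →
        c⁻¹ * (μ ^ 2 + ‖ξ‖ ^ 2 + ‖η‖ ^ 2) ^ ((p - 2) / 2) ≤
            ‖((μ ^ 2 + ‖ξ‖ ^ 2) ^ ((p - 2) / 4) • ξ -
                (μ ^ 2 + ‖η‖ ^ 2) ^ ((p - 2) / 4) • η : EuclideanSpace ℝ (Fin k))‖ ^ 2 /
              ‖ξ - η‖ ^ 2 ∧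
          ‖((μ ^ 2 + ‖ξ‖ ^ 2) ^ ((p - 2) / 4) • ξ -
                (μ ^ 2 + ‖η‖ ^ 2) ^ ((p - 2) / 4) • η : EuclideanSpace ℝ (Fin k))‖ ^ 2 /
              ‖ξ - η‖ ^ 2 ≤
            c * (μ ^ 2 + ‖ξ‖ ^ 2 + ‖η‖ ^ 2) ^ ((p - 2) / 2) :=
  Vp_difference_equivalence_general p hp
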